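/- arXiv:1909.09296 — 7 statements merged into one kernel-verified Lean document; each statement's English description precedes it below -/
import Mathlib

section
/- Let (M, f) be a unique factorisation n-magma with all arities n i ≥ 1. Then (M, f) admits a norm ν : M → ℕ if and only if it has finite decomposition, i.e. the immediate-factor relation r on M is well-founded. -/
/-!
A norm strictly decreases along the immediate-factor relation (for arity at least two because
every other factor has norm at least one), so the relation is the preimage of `<` on `ℕ` and
hence well-founded. Conversely, well-founded recursion defines `ν m` as one plus the largest sum
of the norms of the factors of `m` over its finitely many factorisations (at most one per
operation, by injectivity); this is a norm.
-/

namespace NMagma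

open Finset

variable {ι : Type*} {n : ι → ℕ} {M : Type*} (f : ∀ i, (Fin (n i) → M) → M)

def IsFactor (a b : M) : Prop :=
  ∃ (i : ι) (v : Fin (n i) → M) (j : Fin (n i)), b = f i v ∧ a = v j

structure IsNorm (hn : ∀ i, 1 ≤ n i) (ν : M → ℕ) : Prop where
  one_le : ∀ m, 1 ≤ ν m
  lt_of_arity_eq_one : ∀ i (a : Fin (n i) → M), n i = 1 → ν (a ⟨0, hn i⟩) < ν (f i a)
  sum_le_of_two_le_arity : ∀ i (a : Fin (n i) → M), 2 ≤ n i → ∑ j, ν (a j) ≤ ν (f i a)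

variable {f}

theorem IsNorm.lt_of_isFactor {hn : ∀ i, 1 ≤ n i} {ν : M → ℕ} (hν : IsNorm f hn ν) {a b : M}
    (hab : IsFactor f a b) : ν a < ν b := by
  obtain ⟨i, v, j, rfl, rfl⟩ := hab
  rcases (hn i).eq_or_lt with hi | hi
  · obtain rfl : j = ⟨0, hn i⟩ := Fin.ext (by have := j.isLt; omega)
    exact hν.lt_of_arity_eq_one i v hi.symm
  · obtain ⟨j', hj'⟩ := Fintype.exists_ne_of_one_lt_card (by simpa using hi) j
    calc ν (v j) < ∑ j, ν (v j) :=
          single_lt_sum (f := fun j => ν (v j)) hj' (mem_univ _) (mem_univ _) (hν.one_le _)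
            fun _ _ _ => Nat.zero_le _
      _ ≤ ν (f i v) := hν.sum_le_of_two_le_arity i v hi

theorem IsNorm.wellFounded {hn : ∀ i, 1 ≤ n i} {ν : M → ℕ} (hν : IsNorm f hn ν) :
    WellFounded (IsFactor f) :=
  Subrelation.wf hν.lt_of_isFactor (measure ν).wf

variable [Fintype ι]

open scoped Classical in
noncomputable def normOfWellFounded (hwf : WellFounded (IsFactor f)) : M → ℕ :=
  hwf.fix fun m ν => 1 + univ.sup fun i =>
    if h : m ∈ Set.range (f i) then
      ∑ j, ν (h.choose j) ⟨i, h.choose, j, h.choose_spec.symm, rfl⟩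
    else 0

open scoped Classical in
theorem normOfWellFounded_eq (hwf : WellFounded (IsFactor f)) (m : M) :
    normOfWellFounded hwf m = 1 + univ.sup fun i =>
      if h : m ∈ Set.range (f i) then ∑ j, normOfWellFounded hwf (h.choose j) else 0 :=
  hwf.fix_eq _ m

open scoped Classical in
theorem sum_normOfWellFounded_lt (hinj : ∀ i, Function.Injective (f i))
    (hwf : WellFounded (IsFactor f)) (i : ι) (a : Fin (n i) → M) :
    ∑ j, normOfWellFounded hwf (a j) < normOfWellFounded hwf (f i a) := by
  have hmem : f i a ∈ Set.range (f i) := ⟨a, rfl⟩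
  have hchoose : hmem.choose = a := hinj i hmem.choose_spec
  rw [normOfWellFounded_eq, Nat.lt_one_add_iff]
  calc ∑ j, normOfWellFounded hwf (a j)
      = if h : f i a ∈ Set.range (f i) then ∑ j, normOfWellFounded hwf (h.choose j) else 0 := by
        rw [dif_pos hmem, hchoose]
    _ ≤ _ := le_sup (f := fun i' => if h : f i a ∈ Set.range (f i') then
        ∑ j, normOfWellFounded hwf (h.choose j) else 0) (mem_univ i)

theorem isNorm_normOfWellFounded (hn : ∀ i, 1 ≤ n i) (hinj : ∀ i, Function.Injective (f i))
    (hwf : WellFounded (IsFactor f)) : IsNorm f hn (normOfWellFounded hwf) where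
  one_le m := by
    rw [normOfWellFounded_eq]
    exact Nat.le_add_right 1 _
  lt_of_arity_eq_one i a _ :=
    (single_le_sum (f := fun j => normOfWellFounded hwf (a j)) (fun _ _ => Nat.zero_le _)
      (mem_univ _)).trans_lt (sum_normOfWellFounded_lt hinj hwf i a)
  sum_le_of_two_le_arity i a _ := (sum_normOfWellFounded_lt hinj hwf i a).le

theorem exists_isNorm_iff_wellFounded (hn : ∀ i, 1 ≤ n i)
    (hinj : ∀ i, Function.Injective (f i)) :
    (∃ ν, IsNorm f hn ν) ↔ WellFounded (IsFactor f) :=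
  ⟨fun ⟨_, hν⟩ => hν.wellFounded, fun hwf => ⟨_, isNorm_normOfWellFounded hn hinj hwf⟩⟩

end NMagma

theorem stmt1_general {k : ℕ} (n : Fin k → ℕ) (hn : ∀ i, 1 ≤ n i)
    {M : Type*}
    (f : ∀ i : Fin k, (Fin (n i) → M) → M)
    (hinj : ∀ i, Function.Injective (f i)) :
    (∃ ν : M → ℕ,
        (∀ m, 1 ≤ ν m) ∧
        (∀ (i : Fin k) (a : Fin (n i) → M), n i = 1 → ν (a ⟨0, hn i⟩) < ν (f i a)) ∧
        (∀ (i : Fin k) (a : Fin (n i) → M), 2 ≤ n i → ∑ j, ν (a j) ≤ ν (f i a))) ↔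
      WellFounded (fun a b : M =>
        ∃ (i : Fin k) (v : Fin (n i) → M) (j : Fin (n i)), b = f i v ∧ a = v j) := by
  refine Iff.trans ?_ (NMagma.exists_isNorm_iff_wellFounded hn hinj)
  exact ⟨fun ⟨ν, h1, h2, h3⟩ => ⟨ν, h1, h2, h3⟩,
    fun ⟨ν, hν⟩ => ⟨ν, hν.one_le, hν.lt_of_arity_eq_one, hν.sum_le_of_two_le_arity⟩⟩

/-- Let `(M, f)` be a unique factorisation `n`-magma with all arities
`n i ≥ 1`.  Then `(M, f)` admits a norm `ν : M → ℕ` if and only if it has finite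
decomposition, i.e. the immediate-factor relation on `M` is well-founded. -/
theorem stmt1 {k : ℕ} (n : Fin k → ℕ) (hn : ∀ i, 1 ≤ n i)
    {M : Type*}
    (f : ∀ i : Fin k, (Fin (n i) → M) → M)
    (hinj : ∀ i, Function.Injective (f i))
    (hdisj : ∀ i j, i ≠ j → ∀ (a : Fin (n i) → M) (b : Fin (n j) → M), f i a ≠ f j b) :
    (∃ ν : M → ℕ,
        (∀ m, 1 ≤ ν m) ∧
        (∀ (i : Fin k) (a : Fin (n i) → M), n i = 1 → ν (a ⟨0, hn i⟩) < ν (f i a)) ∧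
        (∀ (i : Fin k) (a : Fin (n i) → M), 2 ≤ n i → ∑ j, ν (a j) ≤ ν (f i a))) ↔
      WellFounded (fun a b : M =>
        ∃ (i : Fin k) (v : Fin (n i) → M) (j : Fin (n i)), b = f i v ∧ a = v j) :=
  stmt1_general n hn f hinj
end

section
/- Let (M, f) be a unique factorisation n-magma with all arities n i ≥ 1, admitting a norm ν : M → ℕ, and suppose the set M⁰ of irreducible elements of M is nonempty and finite. Then (M, f) is a free n-magma generated by its irreducibles: for every type N, every family of maps g : ∀ i : Fin k, (Fin (n i) → N) → N, and every map φ : M⁰ → N, there exists a unique map θ : M → N such that θ m = φ m for every irreducible m, and θ (f i a) = g i (θ ∘ a) for every index i and every tuple a : Fin (n i) → M. -/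
/-!
Unique factorisation says exactly that every element of `M` is either irreducible or of the form
`f i a` for a unique pair `(i, a)`, i.e. that `M ≃ M⁰ ⊕ Σ i, (Fin (n i) → M)`. A norm strictly
decreases from `f i a` to each argument `a j` (for `n i ≥ 2` because the other arguments have norm
at least `1`), so reading this decomposition recursively defines the extension `θ` of `φ` by
well-founded recursion on the norm, and the same induction shows that any two extensions agree.
-/

namespace NMagma

variable {k : ℕ} {n : Fin k → ℕ} {M N : Type*} (f : ∀ i : Fin k, (Fin (n i) → M) → M)

def irreducibles : Set M := {m | ∀ (i : Fin k) (a : Fin (n i) → M), f i a ≠ m}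

theorem exists_eq_of_notMem_irreducibles {m : M} (hm : m ∉ irreducibles f) :
    ∃ i a, f i a = m := by
  simpa [irreducibles] using hm

theorem norm_apply_lt_norm (ν : M → ℕ) (hn : ∀ i, 1 ≤ n i) (hν1 : ∀ m, 1 ≤ ν m)
    (hνu : ∀ (i : Fin k) (a : Fin (n i) → M), n i = 1 → ν (a ⟨0, hn i⟩) < ν (f i a))
    (hνs : ∀ (i : Fin k) (a : Fin (n i) → M), 2 ≤ n i → ∑ j, ν (a j) ≤ ν (f i a))
    (i : Fin k) (a : Fin (n i) → M) (j : Fin (n i)) : ν (a j) < ν (f i a) := by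
  rcases (hn i).eq_or_lt with hunary | hmulti
  · obtain rfl : j = ⟨0, hn i⟩ := Fin.ext (by omega)
    exact hνu i a hunary.symm
  · obtain ⟨j', -, hj'⟩ := Finset.exists_mem_ne (s := Finset.univ) (by simpa using hmulti) j
    calc ν (a j) < ∑ j, ν (a j) :=
          Finset.single_lt_sum (f := fun j => ν (a j)) hj' (Finset.mem_univ j)
            (Finset.mem_univ j') (hν1 (a j')) fun _ _ _ => Nat.zero_le _
      _ ≤ ν (f i a) := hνs i a hmulti

variable {f} in
theorem hom_ext_of_norm (ν : M → ℕ)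
    (harg : ∀ (i : Fin k) (a : Fin (n i) → M) (j : Fin (n i)), ν (a j) < ν (f i a))
    (g : ∀ i : Fin k, (Fin (n i) → N) → N) {θ₁ θ₂ : M → N}
    (h : ∀ x : irreducibles f, θ₁ x = θ₂ x)
    (h₁ : ∀ i a, θ₁ (f i a) = g i (θ₁ ∘ a)) (h₂ : ∀ i a, θ₂ (f i a) = g i (θ₂ ∘ a)) :
    θ₁ = θ₂ := by
  funext m
  induction m using (measure ν).wf.induction with
  | _ m IH =>
    by_cases hm : m ∈ irreducibles f
    · exact h ⟨m, hm⟩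
    · obtain ⟨i, a, rfl⟩ := exists_eq_of_notMem_irreducibles f hm
      rw [h₁, h₂]
      congr 1
      funext j
      exact IH (a j) (harg i a j)

theorem bijective_sumElim_irreducibles (hinj : ∀ i, Function.Injective (f i))
    (hdisj : ∀ i j, i ≠ j → ∀ (a : Fin (n i) → M) (b : Fin (n j) → M), f i a ≠ f j b) :
    Function.Bijective
      (Sum.elim Subtype.val fun p => f p.1 p.2 : irreducibles f ⊕ (Σ i, Fin (n i) → M) → M) := by
  constructor
  · rintro (⟨x, hx⟩ | ⟨i, a⟩) (⟨y, hy⟩ | ⟨j, b⟩) h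
    · exact congrArg Sum.inl (Subtype.ext h)
    · exact absurd h.symm (hx j b)
    · exact absurd h (hy i a)
    · obtain rfl : i = j := by_contra fun hij => hdisj i j hij a b h
      obtain rfl : a = b := hinj i h
      rfl
  · intro m
    by_cases hm : m ∈ irreducibles f
    · exact ⟨.inl ⟨m, hm⟩, rfl⟩
    · obtain ⟨i, a, rfl⟩ := exists_eq_of_notMem_irreducibles f hm
      exact ⟨.inr ⟨i, a⟩, rfl⟩

variable (hinj : ∀ i, Function.Injective (f i))
    (hdisj : ∀ i j, i ≠ j → ∀ (a : Fin (n i) → M) (b : Fin (n j) → M), f i a ≠ f j b)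

noncomputable def decompose : M ≃ irreducibles f ⊕ (Σ i, Fin (n i) → M) :=
  (Equiv.ofBijective _ (bijective_sumElim_irreducibles f hinj hdisj)).symm

theorem decompose_irreducible (x : irreducibles f) : decompose f hinj hdisj x = .inl x :=
  (decompose f hinj hdisj).apply_symm_apply (.inl x)

theorem decompose_reducible (i : Fin k) (a : Fin (n i) → M) :
    decompose f hinj hdisj (f i a) = .inr ⟨i, a⟩ :=
  (decompose f hinj hdisj).apply_symm_apply (.inr ⟨i, a⟩)

noncomputable def lift (ν : M → ℕ)
    (harg : ∀ (i : Fin k) (a : Fin (n i) → M) (j : Fin (n i)), ν (a j) < ν (f i a))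
    (g : ∀ i : Fin k, (Fin (n i) → N) → N) (φ : irreducibles f → N) (m : M) : N :=
  match h : decompose f hinj hdisj m with
  | .inl x => φ x
  | .inr ⟨i, a⟩ => g i fun j => lift ν harg g φ (a j)
termination_by ν m
decreasing_by
  obtain rfl : m = f i a :=
    ((decompose f hinj hdisj).symm_apply_apply m).symm.trans (congrArg _ h)
  exact harg i a j

variable (ν : M → ℕ) (harg : ∀ (i : Fin k) (a : Fin (n i) → M) (j : Fin (n i)), ν (a j) < ν (f i a))
    (g : ∀ i : Fin k, (Fin (n i) → N) → N) (φ : irreducibles f → N)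

theorem lift_irreducible (x : irreducibles f) : lift f hinj hdisj ν harg g φ x = φ x := by
  rw [lift, decompose_irreducible]

theorem lift_reducible (i : Fin k) (a : Fin (n i) → M) :
    lift f hinj hdisj ν harg g φ (f i a) = g i (lift f hinj hdisj ν harg g φ ∘ a) := by
  rw [lift, decompose_reducible]
  rfl

end NMagma

open NMagma in
theorem stmt2_general {k : ℕ} (n : Fin k → ℕ) (hn : ∀ i, 1 ≤ n i)
    {M : Type*}
    (f : ∀ i : Fin k, (Fin (n i) → M) → M)
    (hinj : ∀ i, Function.Injective (f i))
    (hdisj : ∀ i j, i ≠ j → ∀ (a : Fin (n i) → M) (b : Fin (n j) → M), f i a ≠ f j b)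
    (ν : M → ℕ)
    (hν1 : ∀ m, 1 ≤ ν m)
    (hνu : ∀ (i : Fin k) (a : Fin (n i) → M), n i = 1 → ν (a ⟨0, hn i⟩) < ν (f i a))
    (hνs : ∀ (i : Fin k) (a : Fin (n i) → M), 2 ≤ n i → ∑ j, ν (a j) ≤ ν (f i a))
    (N : Type*) (g : ∀ i : Fin k, (Fin (n i) → N) → N)
    (φ : {m : M | ∀ (i : Fin k) (a : Fin (n i) → M), f i a ≠ m} → N) :
    ∃! θ : M → N,
      (∀ m : {m : M | ∀ (i : Fin k) (a : Fin (n i) → M), f i a ≠ m}, θ m = φ m) ∧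
      (∀ (i : Fin k) (a : Fin (n i) → M), θ (f i a) = g i (θ ∘ a)) := by
  have harg := norm_apply_lt_norm f ν hn hν1 hνu hνs
  refine ⟨lift f hinj hdisj ν harg g φ,
    ⟨lift_irreducible f hinj hdisj ν harg g φ, lift_reducible f hinj hdisj ν harg g φ⟩, ?_⟩
  rintro θ ⟨hθ_irreducible, hθ_reducible⟩
  exact hom_ext_of_norm ν harg g
    (fun x => (hθ_irreducible x).trans (lift_irreducible f hinj hdisj ν harg g φ x).symm)
    hθ_reducible (lift_reducible f hinj hdisj ν harg g φ)

/-- A unique factorisation normed `n`-magma with a nonempty finite set of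
irreducibles is a free `n`-magma generated by its irreducibles. -/
theorem stmt2 {k : ℕ} (n : Fin k → ℕ) (hn : ∀ i, 1 ≤ n i)
    {M : Type*}
    (f : ∀ i : Fin k, (Fin (n i) → M) → M)
    (hinj : ∀ i, Function.Injective (f i))
    (hdisj : ∀ i j, i ≠ j → ∀ (a : Fin (n i) → M) (b : Fin (n j) → M), f i a ≠ f j b)
    (ν : M → ℕ)
    (hν1 : ∀ m, 1 ≤ ν m)
    (hνu : ∀ (i : Fin k) (a : Fin (n i) → M), n i = 1 → ν (a ⟨0, hn i⟩) < ν (f i a))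
    (hνs : ∀ (i : Fin k) (a : Fin (n i) → M), 2 ≤ n i → ∑ j, ν (a j) ≤ ν (f i a))
    (hne : ∃ m : M, ∀ (i : Fin k) (a : Fin (n i) → M), f i a ≠ m)
    (hfin : {m : M | ∀ (i : Fin k) (a : Fin (n i) → M), f i a ≠ m}.Finite)
    (N : Type*) (g : ∀ i : Fin k, (Fin (n i) → N) → N)
    (φ : {m : M | ∀ (i : Fin k) (a : Fin (n i) → M), f i a ≠ m} → N) :
    ∃! θ : M → N,
      (∀ m : {m : M | ∀ (i : Fin k) (a : Fin (n i) → M), f i a ≠ m}, θ m = φ m) ∧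
      (∀ (i : Fin k) (a : Fin (n i) → M), θ (f i a) = g i (θ ∘ a)) :=
  stmt2_general n hn f hinj hdisj ν hν1 hνu hνs N g φ
end

section
/- For every p : ℕ and every n : ℕ, the p-Motzkin number satisfies the closed form M p n = ∑_{k=0}^{⌊n/2⌋} Nat.choose n (2k) · C p k, where C p k = p^(k+1) · Nat.catalan k is the k-th p-Catalan number. -/
/-!
With `T n = ∑ₖ C(n, 2k) cₖ`, Pascal's rule gives `T (n+2) = T (n+1) + ∑ₛ C(n+1, 2s+1) c_{s+1}`,
while the upper Vandermonde identity `∑_{i+j=m} C(i,a) C(j,b) = C(m+1, a+b+1)` turns the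
convolution `∑_{i+j=n} Tᵢ Tⱼ` into `∑ₛ C(n+1, 2s+1) ∑_{a+b=s} c_a c_b`. The two agree because
the `p`-Catalan numbers satisfy `c_{s+1} = ∑_{a+b=s} c_a c_b`, so `T` obeys the Motzkin
recurrence with `T 0 = T 1 = p`.
-/

open Finset

theorem Nat.sum_antidiagonal_choose_mul_choose (m a b : ℕ) :
    ∑ kl ∈ antidiagonal m, kl.1.choose a * kl.2.choose b = (m + 1).choose (a + b + 1) := by
  induction m generalizing b with
  | zero => cases a <;> cases b <;> simp [Nat.choose_eq_zero_of_lt]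
  | succ m ih =>
    rw [Finset.Nat.sum_antidiagonal_succ']
    cases b with
    | zero =>
      have := ih 0
      simp only [Nat.choose_zero_right, mul_one] at this ⊢
      rw [this, Nat.choose_succ_succ' (m + 1) a]
    | succ b =>
      simp only [Nat.choose_succ_succ', mul_add, sum_add_distrib, ih]
      simp [← Nat.add_assoc, Nat.choose_succ_succ']

section EvenBinomialSum

variable {R : Type*} [CommSemiring R] (c : ℕ → R)

def evenBinomialSum (n : ℕ) : R := ∑ k ∈ range (n / 2 + 1), (n.choose (2 * k) : R) * c k

theorem evenBinomialSum_eq_sum_range {n N : ℕ} (h : n / 2 < N) :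
    evenBinomialSum c n = ∑ k ∈ range N, (n.choose (2 * k) : R) * c k := by
  refine sum_subset (range_subset_range.mpr h) fun k _ hk => ?_
  rw [Nat.choose_eq_zero_of_lt (by simp at hk; omega), Nat.cast_zero, zero_mul]

@[simp]
theorem evenBinomialSum_zero : evenBinomialSum c 0 = c 0 := by simp [evenBinomialSum]

@[simp]
theorem evenBinomialSum_one : evenBinomialSum c 1 = c 0 := by simp [evenBinomialSum]

theorem evenBinomialSum_add_two (n : ℕ) :
    evenBinomialSum c (n + 2) = evenBinomialSum c (n + 1) +
      ∑ s ∈ range (n + 1), ((n + 1).choose (2 * s + 1) : R) * c (s + 1) := by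
  rw [evenBinomialSum_eq_sum_range c (N := n + 2) (by omega),
    evenBinomialSum_eq_sum_range c (N := n + 2) (by omega),
    sum_range_succ' (fun k => ((n + 2).choose (2 * k) : R) * c k),
    sum_range_succ' (fun k => ((n + 1).choose (2 * k) : R) * c k)]
  simp only [Nat.mul_succ, Nat.choose_succ_succ' (n + 1), Nat.cast_add, add_mul, sum_add_distrib,
    mul_zero, Nat.choose_zero_right, Nat.cast_one, one_mul]
  ring

theorem sum_antidiagonal_evenBinomialSum_mul (m : ℕ) :
    ∑ kl ∈ antidiagonal m, evenBinomialSum c kl.1 * evenBinomialSum c kl.2 =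
      ∑ s ∈ range (m + 1), ((m + 1).choose (2 * s + 1) : R) *
        ∑ ab ∈ antidiagonal s, c ab.1 * c ab.2 := by
  set g : ℕ → ℕ → R := fun a b => ((m + 1).choose (2 * a + 2 * b + 1) : R) * (c a * c b)
  have lhs : ∑ kl ∈ antidiagonal m, evenBinomialSum c kl.1 * evenBinomialSum c kl.2 =
      ∑ a ∈ range (m + 1), ∑ b ∈ range (m + 1), g a b := by
    calc _ = ∑ kl ∈ antidiagonal m, ∑ a ∈ range (m + 1), ∑ b ∈ range (m + 1),
          ((kl.1.choose (2 * a) * kl.2.choose (2 * b) : ℕ) : R) * (c a * c b) := by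
          refine sum_congr rfl fun kl hkl => ?_
          have := mem_antidiagonal.mp hkl
          rw [evenBinomialSum_eq_sum_range c (N := m + 1) (by omega),
            evenBinomialSum_eq_sum_range c (N := m + 1) (by omega), sum_mul_sum]
          push_cast
          simp only [mul_mul_mul_comm]
      _ = _ := by
          rw [sum_comm]
          refine sum_congr rfl fun a _ => ?_
          rw [sum_comm]
          refine sum_congr rfl fun b _ => ?_
          rw [← sum_mul, ← Nat.cast_sum, Nat.sum_antidiagonal_choose_mul_choose]
  have rhs : ∑ s ∈ range (m + 1), ((m + 1).choose (2 * s + 1) : R) *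
        ∑ ab ∈ antidiagonal s, c ab.1 * c ab.2 =
      ∑ a ∈ range (m + 1), ∑ b ∈ range (m + 1 - a), g a b := by
    rw [← sum_range_diag_flip]
    refine sum_congr rfl fun s _ => ?_
    rw [Finset.Nat.sum_antidiagonal_eq_sum_range_succ (fun a b => c a * c b), mul_sum]
    refine sum_congr rfl fun a ha => ?_
    simp only [g]
    have := mem_range_succ_iff.mp ha
    rw [show 2 * a + 2 * (s - a) = 2 * s by omega]
  rw [lhs, rhs]
  refine sum_congr rfl fun a ha => (sum_subset (range_subset_range.mpr (by omega)) ?_).symm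
  intro b _ hb
  simp only [mem_range] at ha hb
  simp only [g]
  rw [Nat.choose_eq_zero_of_lt (by omega), Nat.cast_zero, zero_mul]

end EvenBinomialSum

theorem evenBinomialSum_add_two_of_convolution {R : Type*} [CommSemiring R] {c : ℕ → R}
    (hc : ∀ s, c (s + 1) = ∑ ab ∈ antidiagonal s, c ab.1 * c ab.2) (n : ℕ) :
    evenBinomialSum c (n + 2) = evenBinomialSum c (n + 1) +
      ∑ kl ∈ antidiagonal n, evenBinomialSum c kl.1 * evenBinomialSum c kl.2 := by
  simp only [evenBinomialSum_add_two, sum_antidiagonal_evenBinomialSum_mul, hc]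

def pCatalan (p k : ℕ) : ℕ := p ^ (k + 1) * catalan k

theorem pCatalan_succ (p k : ℕ) :
    pCatalan p (k + 1) = ∑ ij ∈ antidiagonal k, pCatalan p ij.1 * pCatalan p ij.2 := by
  rw [pCatalan, catalan_succ', mul_sum]
  refine sum_congr rfl fun ij hij => ?_
  rw [← mem_antidiagonal.mp hij, pCatalan, pCatalan]
  ring

/-- The `p`-Motzkin numbers (defined by `M p 0 = M p 1 = p` and
`M p n = M p (n-1) + ∑_{k=0}^{n-2} M p k · M p (n-k-2)` for `n ≥ 2`) satisfy the closed
form `M p n = ∑_{k=0}^{⌊n/2⌋} choose n (2k) · C p k`, where `C p k = p^(k+1) · catalan k`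
is the `k`-th `p`-Catalan number. -/
theorem stmt7 (p : ℕ) (M : ℕ → ℕ) (hM0 : M 0 = p) (hM1 : M 1 = p)
    (hM : ∀ n : ℕ, M (n + 2) = M (n + 1) + ∑ k ∈ Finset.range (n + 1), M k * M (n - k))
    (n : ℕ) :
    M n = ∑ k ∈ Finset.range (n / 2 + 1), Nat.choose n (2 * k) * (p ^ (k + 1) * catalan k) := by
  change M n = evenBinomialSum (pCatalan p) n
  induction n using Nat.strong_induction_on with
  | _ n ih =>
    match n with
    | 0 => simp [hM0, pCatalan]
    | 1 => simp [hM1, pCatalan]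
    | n + 2 =>
      rw [hM, evenBinomialSum_add_two_of_convolution (pCatalan_succ p), ih (n + 1) (by omega),
        ← Finset.Nat.sum_antidiagonal_eq_sum_range_succ (fun i j => M i * M j)]
      congr 1
      refine sum_congr rfl fun kl hkl => ?_
      have := mem_antidiagonal.mp hkl
      rw [ih kl.1 (by omega), ih kl.2 (by omega)]
end

section
/- For every p : ℕ and every n : ℕ, the order-3 p-Fuss-Catalan number satisfies (3n+1) · T p n = Nat.choose (3n+1) n · p^(2n+1); equivalently, T p n = (1/(3n+1)) · choose (3n+1) n · p^(2n+1). -/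
/-!
Writing `T n = p ^ (2n+1) · t n` reduces everything to `p = 1`. The Raney numbers
`R n a = a / (3n+a) · C(3n+a, n)` satisfy the Pascal-type rule
`R (n+1) (a+1) = R (n+1) a + R n (a+3)` together with `R (n+1) 0 = 0`, and these two facts
alone give the convolution `∑ₖ R k 1 · R (n-k) a = R n (a+1)` by induction on `n` and `a`.
Hence the triple convolution of `R · 1` is `R n 3 = R (n+1) 1`: the sequence `R · 1` obeys the
recurrence of `t`, so `t n = R n 1 = C(3n+1, n) / (3n+1)`.
-/

open Finset

/-- The Raney number `a / (m n + a) · C(m n + a, n)`, written without division as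
`C(a + m n, n) - m · C(a + m n - 1, n - 1)`. -/
def raney (m : ℕ) : ℕ → ℕ → ℤ
  | 0, _ => 1
  | n + 1, a => (a + m * (n + 1)).choose (n + 1) - m * (a + m * (n + 1) - 1).choose n

section Raney

variable (m : ℕ)

@[simp]
theorem raney_zero_left (a : ℕ) : raney m 0 a = 1 := rfl

theorem raney_succ_zero (n : ℕ) : raney m (n + 1) 0 = 0 := by
  rcases m with _ | k
  · simp [raney]
  have h := Nat.add_one_mul_choose_eq (k * (n + 1) + n) n
  rw [raney, show 0 + (k + 1) * (n + 1) = k * (n + 1) + n + 1 by ring, Nat.add_sub_cancel]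
  refine mul_right_cancel₀ (by positivity : ((n : ℤ) + 1) ≠ 0) ?_
  have hz : ((k * (n + 1) + n + 1 : ℕ) : ℤ) * (k * (n + 1) + n).choose n =
      (k * (n + 1) + n + 1).choose (n + 1) * ((n : ℤ) + 1) := by exact_mod_cast h
  push_cast at hz ⊢
  linear_combination -hz

theorem raney_succ_succ (n a : ℕ) :
    raney m (n + 1) (a + 1) = raney m (n + 1) a + raney m n (a + m) := by
  cases n with
  | zero => simp [raney]
  | succ n =>
    obtain ⟨X, hX⟩ : ∃ X, a + m * (n + 2) = X := ⟨_, rfl⟩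
    have hpascal : m * X.choose (n + 1) = m * ((X - 1).choose n + (X - 1).choose (n + 1)) := by
      rcases m with _ | k
      · simp
      rw [← Nat.choose_succ_succ', Nat.sub_add_cancel (by rw [← hX]; nlinarith)]
    simp only [raney]
    rw [show a + 1 + m * (n + 1 + 1) = X + 1 by rw [← hX]; ring,
      show a + m + m * (n + 1) = X by rw [← hX]; ring,
      show a + m * (n + 1 + 1) = X by rw [← hX], Nat.add_sub_cancel, Nat.choose_succ_succ']
    have hz : (m : ℤ) * X.choose (n + 1) = m * ((X - 1).choose n + (X - 1).choose (n + 1)) := by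
      exact_mod_cast hpascal
    push_cast
    linear_combination -hz

theorem raney_succ_one (n : ℕ) : raney m (n + 1) 1 = raney m n m := by
  simpa [raney_succ_zero] using raney_succ_succ m n 0

theorem sum_antidiagonal_raney_one_mul (n a : ℕ) :
    ∑ p ∈ antidiagonal n, raney m p.1 1 * raney m p.2 a = raney m n (a + 1) := by
  induction n generalizing a with
  | zero => simp
  | succ n ihn =>
    induction a with
    | zero => simp [Nat.sum_antidiagonal_succ', raney_succ_zero]
    | succ a iha =>
      rw [Nat.sum_antidiagonal_succ'] at iha ⊢
      simp only [raney_zero_left] at iha ⊢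
      simp only [raney_succ_succ m _ a, mul_add, sum_add_distrib]
      rw [← add_assoc, iha, ihn, raney_succ_succ m n (a + 1), add_right_comm a]

theorem sum_range_raney_triple (n : ℕ) :
    ∑ i ∈ range (n + 1), ∑ j ∈ range (n - i + 1),
      raney m i 1 * raney m j 1 * raney m (n - i - j) 1 = raney m n 3 := by
  have conv (k a : ℕ) :
      ∑ i ∈ range (k + 1), raney m i 1 * raney m (k - i) a = raney m k (a + 1) := by
    rw [← sum_antidiagonal_raney_one_mul, Nat.sum_antidiagonal_eq_sum_range_succ_mk]
  calc _ = ∑ i ∈ range (n + 1), raney m i 1 * raney m (n - i) 2 := by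
        refine sum_congr rfl fun i _ => ?_
        rw [← conv (n - i) 1, mul_sum]
        simp only [mul_assoc, Nat.sub_sub]
    _ = raney m n 3 := conv n 2

theorem mul_raney_one_eq_choose (n : ℕ) :
    ((m * n + 1 : ℕ) : ℤ) * raney m n 1 = (m * n + 1).choose n := by
  cases n with
  | zero => simp
  | succ n =>
    have h := Nat.add_one_mul_choose_eq (m * (n + 1)) n
    rw [raney, add_comm 1, Nat.add_sub_cancel]
    have hz : ((m * (n + 1) + 1 : ℕ) : ℤ) * (m * (n + 1)).choose n =
        (m * (n + 1) + 1).choose (n + 1) * ((n : ℤ) + 1) := by exact_mod_cast h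
    push_cast at hz ⊢
    linear_combination (-m : ℤ) * hz

end Raney

theorem eq_pow_mul_raney {p : ℕ} {T : ℕ → ℕ} (hT0 : T 0 = p)
    (hT : ∀ n : ℕ, T (n + 1) =
      ∑ i ∈ range (n + 1), ∑ j ∈ range (n - i + 1), T i * T j * T (n - i - j))
    (n : ℕ) : (T n : ℤ) = p ^ (2 * n + 1) * raney 3 n 1 := by
  induction n using Nat.strong_induction_on with
  | _ n ih =>
  cases n with
  | zero => simp [hT0]
  | succ n =>
    rw [hT, raney_succ_one, ← sum_range_raney_triple, mul_sum]
    push_cast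
    refine sum_congr rfl fun i hi => ?_
    rw [mul_sum]
    refine sum_congr rfl fun j hj => ?_
    have hin : i ≤ n := Nat.lt_succ_iff.mp (mem_range.mp hi)
    have hjn : j ≤ n - i := Nat.lt_succ_iff.mp (mem_range.mp hj)
    rw [ih i (by omega), ih j (by omega), ih (n - i - j) (by omega),
      show 2 * (n + 1) + 1 = (2 * i + 1) + (2 * j + 1) + (2 * (n - i - j) + 1) by omega]
    ring

/-- The order-3 `p`-Fuss-Catalan numbers (defined by `T p 0 = p` and
`T p n = ∑_{i=0}^{n-1} ∑_{j=0}^{n-1-i} T p i · T p j · T p (n-1-i-j)` for `n ≥ 1`)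
satisfy `(3n+1) · T p n = choose (3n+1) n · p^(2n+1)`. -/
theorem stmt11 (p : ℕ) (T : ℕ → ℕ) (hT0 : T 0 = p)
    (hT : ∀ n : ℕ, T (n + 1) =
      ∑ i ∈ Finset.range (n + 1), ∑ j ∈ Finset.range (n - i + 1),
        T i * T j * T (n - i - j))
    (n : ℕ) :
    (3 * n + 1) * T n = Nat.choose (3 * n + 1) n * p ^ (2 * n + 1) := by
  have h := mul_raney_one_eq_choose 3 n
  push_cast at h
  zify
  rw [eq_pow_mul_raney hT0 hT n, ← h]
  ring
end

section
/- Let X be a finite set with Nat.card X = p, and let ν be the Fibonacci norm on the Cartesian (1,1)-magma generated by X. Then for every n ≥ 1, the number of elements of norm n, namely Nat.card {w : List (Fin 2) × X // ν w = n}, equals the p-Fibonacci number F p n. -/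
/-!
A word of norm `n + 1` is a letter `x ∈ X` preceded by a sequence of symbols of total weight `n`,
i.e. a composition of `n` into parts `1` and `2`. Splitting off the first symbol shows that these
compositions satisfy the Fibonacci recurrence, so there are `fib (n + 1)` of them and
`p * fib (n + 1) = F p (n + 1)` words of norm `n + 1`. No word has norm `0`, and `F p 0 = 0`.
-/

def pFib (p : ℕ) : ℕ → ℕ
  | 0 => 0
  | 1 => p
  | n + 2 => pFib p (n + 1) + pFib p n

theorem pFib_eq_mul_fib (p : ℕ) : ∀ n, pFib p n = p * Nat.fib n
  | 0 => by simp [pFib]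
  | 1 => by simp [pFib]
  | n + 2 => by
    rw [pFib, pFib_eq_mul_fib p (n + 1), pFib_eq_mul_fib p n, Nat.fib_add_two, mul_add, add_comm]

namespace FibWord

/-- Written exactly as in the norm of the theorem, where Lean elaborates it by first coercing the
list to `List ℕ`; this keeps the two definitionally equal. -/
def weight (l : List (Fin 2)) : ℕ := (l.map (fun u => (u : ℕ) + 1)).sum

@[simp] lemma weight_nil : weight [] = 0 := rfl

@[simp] lemma weight_cons (u : Fin 2) (l : List (Fin 2)) : weight (u :: l) = u + 1 + weight l :=
  rfl

lemma weight_cons_zero (l : List (Fin 2)) : weight (0 :: l) = weight l + 1 := by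
  simp [add_comm]

lemma weight_cons_one (l : List (Fin 2)) : weight (1 :: l) = weight l + 2 := by
  simp [add_comm]

lemma length_le_weight (l : List (Fin 2)) : l.length ≤ weight l := by
  induction l with
  | nil => simp
  | cons u l ih => simp only [weight_cons, List.length_cons]; omega

instance (m : ℕ) : Finite {l : List (Fin 2) // weight l = m} :=
  ((List.finite_length_le (Fin 2) m).subset fun l (hl : weight l = m) =>
    hl ▸ length_le_weight l).to_subtype

lemma weight_eq_zero_iff {l : List (Fin 2)} : weight l = 0 ↔ l = [] := by
  cases l <;> simp

lemma weight_eq_one_iff {l : List (Fin 2)} : weight l = 1 ↔ l = [0] := by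
  rcases l with _ | ⟨u, _ | ⟨v, l⟩⟩
  · simp
  · fin_cases u <;> simp
  · simp only [weight_cons, List.cons.injEq, reduceCtorEq, and_false, iff_false]
    omega

def consEquiv (m : ℕ) :
    {l // weight l = m + 1} ⊕ {l // weight l = m} ≃ {l // weight l = m + 2} where
  toFun := Sum.elim (fun l => ⟨0 :: l, by rw [weight_cons_zero, l.2]⟩)
    (fun l => ⟨1 :: l, by rw [weight_cons_one, l.2]⟩)
  invFun
    | ⟨0 :: l, h⟩ => Sum.inl ⟨l, by rw [weight_cons_zero] at h; omega⟩
    | ⟨1 :: l, h⟩ => Sum.inr ⟨l, by rw [weight_cons_one] at h; omega⟩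
    | ⟨[], h⟩ => absurd h (by simp)
  left_inv := by rintro (⟨l, h⟩ | ⟨l, h⟩) <;> rfl
  right_inv := by
    rintro ⟨_ | ⟨u, l⟩, h⟩
    · simp at h
    · fin_cases u <;> rfl

theorem card_weight_eq : ∀ m, Nat.card {l // weight l = m} = Nat.fib (m + 1)
  | 0 => by simp [weight_eq_zero_iff]
  | 1 => by simp [weight_eq_one_iff]
  | m + 2 => by
    rw [← Nat.card_congr (consEquiv m), Nat.card_sum, card_weight_eq (m + 1), card_weight_eq m,
      add_comm]
    exact Nat.fib_add_two.symm

end FibWord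

theorem stmt13_general {X : Type*} (p : ℕ) (hX : Nat.card X = p)
    (n : ℕ) :
    Nat.card {w : List (Fin 2) × X //
        1 + (w.1.map (fun u => (u : ℕ) + 1)).sum = n} = pFib p n := by
  subst hX
  rw [pFib_eq_mul_fib]
  cases n with
  | zero => simp
  | succ m =>
    have e : {w : List (Fin 2) × X // 1 + FibWord.weight w.1 = m + 1} ≃
        {l // FibWord.weight l = m} × X :=
      (Equiv.subtypeEquivRight fun _ => by omega).trans Equiv.prodSubtypeFstEquivSubtypeProd
    rw [mul_comm, ← FibWord.card_weight_eq, ← Nat.card_prod]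
    exact Nat.card_congr e

/-- On the Cartesian (1,1)-magma `List (Fin 2) × X` generated by a
finite set `X` with `Nat.card X = p`, equipped with the Fibonacci norm
`ν (l, x) = 1 + ∑_{u ∈ l} (u + 1)` (symbol `u₁ = 0` has weight `1`, symbol `u₂ = 1` has
weight `2`), the number of elements of norm `n ≥ 1` is the `p`-Fibonacci number
`F p n`. -/
theorem stmt13 {X : Type*} [Finite X] (p : ℕ) (hX : Nat.card X = p)
    (n : ℕ) (hn : 1 ≤ n) :
    Nat.card {w : List (Fin 2) × X //
        1 + (w.1.map (fun u => (u : ℕ) + 1)).sum = n} = pFib p n :=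
  stmt13_general p hX n
end

section
/- Let X be a finite set with Nat.card X = p, and let νM be the Motzkin norm on the Cartesian (1,2)-magma W X generated by X. Then for every n ≥ 1, the number of elements of norm n, namely Nat.card {w : W X // νM w = n}, equals the p-Motzkin number M p (n-1). -/
universe u

/-- The Cartesian (1,2)-magma generated by `X`: planar unary–binary trees with leaves
labelled by `X`, with the unary map `un` and the binary map `bin`. -/
inductive W (X : Type u) : Type u
  | leaf : X → W X
  | un : W X → W X
  | bin : W X → W X → W X

/-- The Motzkin norm on the Cartesian (1,2)-magma `W X`:
`νM (leaf x) = 1`, `νM (un w) = νM w + 1`, `νM (bin w w') = νM w + νM w' + 1`. -/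
def motzkinNorm {X : Type u} : W X → ℕ
  | .leaf _ => 1
  | .un w => motzkinNorm w + 1
  | .bin w w' => motzkinNorm w + motzkinNorm w' + 1

lemma motzkinNorm_pos {X : Type u} (w : W X) : 1 ≤ motzkinNorm w := by
  cases w <;> simp [motzkinNorm]

lemma finite_le {X : Type u} [Finite X] (n : ℕ) :
    Finite {w : W X // motzkinNorm w ≤ n} := by
  induction n with
  | zero =>
    have : IsEmpty {w : W X // motzkinNorm w ≤ 0} :=
      ⟨fun ⟨w, hw⟩ => by have := motzkinNorm_pos w; omega⟩
    infer_instance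
  | succ n ih =>
    haveI := ih
    apply Finite.of_injective
      (fun w : {w : W X // motzkinNorm w ≤ n + 1} =>
        match w with
        | ⟨.leaf x, _⟩ => (Sum.inl x :
            X ⊕ {w : W X // motzkinNorm w ≤ n} ⊕
              ({w : W X // motzkinNorm w ≤ n} × {w : W X // motzkinNorm w ≤ n}))
        | ⟨.un v, h⟩ => Sum.inr (Sum.inl ⟨v, by simp [motzkinNorm] at h; omega⟩)
        | ⟨.bin v v', h⟩ =>
            Sum.inr (Sum.inr
              (⟨v, by have := motzkinNorm_pos v'; simp [motzkinNorm] at h; omega⟩,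
               ⟨v', by have := motzkinNorm_pos v; simp [motzkinNorm] at h; omega⟩)))
    rintro ⟨w1, h1⟩ ⟨w2, h2⟩ h
    cases w1 <;> cases w2 <;> simp_all

instance finite_eq {X : Type u} [Finite X] (n : ℕ) :
    Finite {w : W X // motzkinNorm w = n} := by
  haveI := finite_le (X := X) n
  exact Finite.of_injective
    (fun w => (⟨w.1, le_of_eq w.2⟩ : {w : W X // motzkinNorm w ≤ n}))
    (fun a b h => by
      cases a; cases b; simp_all)

lemma card_one {X : Type u} [Finite X] :
    Nat.card {w : W X // motzkinNorm w = 1} = Nat.card X := by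
  symm
  apply Nat.card_congr
  apply Equiv.ofBijective (fun x => (⟨.leaf x, rfl⟩ : {w : W X // motzkinNorm w = 1}))
  constructor
  · intro a b h
    exact W.leaf.inj (congrArg Subtype.val h)
  · rintro ⟨w, hw⟩
    cases w with
    | leaf x => exact ⟨x, rfl⟩
    | un v => exfalso; have := motzkinNorm_pos v; simp [motzkinNorm] at hw; omega
    | bin v v' =>
        exfalso; have := motzkinNorm_pos v; have := motzkinNorm_pos v'
        simp [motzkinNorm] at hw; omega

lemma card_rec {X : Type u} [Finite X] (n : ℕ) :
    Nat.card {w : W X // motzkinNorm w = n + 2} =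
      Nat.card {w : W X // motzkinNorm w = n + 1} +
        ∑ k ∈ Finset.range n,
          Nat.card {w : W X // motzkinNorm w = k + 1} *
            Nat.card {w : W X // motzkinNorm w = n - k} := by
  classical
  have e : ({w : W X // motzkinNorm w = n + 1} ⊕
      Σ k : Fin n, {w : W X // motzkinNorm w = (k : ℕ) + 1} ×
        {w : W X // motzkinNorm w = n - (k : ℕ)}) ≃
      {w : W X // motzkinNorm w = n + 2} := by
    apply Equiv.ofBijective (fun a =>
      match a with
      | Sum.inl ⟨w, hw⟩ => ⟨.un w, by simp [motzkinNorm, hw]⟩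
      | Sum.inr ⟨k, ⟨w, hw⟩, ⟨w', hw'⟩⟩ =>
          ⟨.bin w w', by
            simp [motzkinNorm, hw, hw']
            have := k.isLt
            omega⟩)
    constructor
    · rintro (⟨w1, h1⟩ | ⟨k, ⟨w1, h1⟩, ⟨w1', h1'⟩⟩)
          (⟨w2, h2⟩ | ⟨l, ⟨w2, h2⟩, ⟨w2', h2'⟩⟩) h <;>
        simp_all
      obtain ⟨rfl, rfl⟩ := h
      have : k = l := Fin.ext (by omega)
      subst this
      simp
    · rintro ⟨w, hw⟩
      cases w with
      | leaf x => exfalso; simp [motzkinNorm] at hw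
      | un v => exact ⟨Sum.inl ⟨v, by simp [motzkinNorm] at hw; omega⟩, rfl⟩
      | bin v v' =>
          have hv := motzkinNorm_pos v
          have hv' := motzkinNorm_pos v'
          simp [motzkinNorm] at hw
          refine ⟨Sum.inr ⟨⟨motzkinNorm v - 1, by omega⟩,
            ⟨v, show motzkinNorm v = motzkinNorm v - 1 + 1 by omega⟩,
            ⟨v', show motzkinNorm v' = n - (motzkinNorm v - 1) by omega⟩⟩, rfl⟩
  rw [← Nat.card_congr e]
  haveI : ∀ m, Fintype {w : W X // motzkinNorm w = m} := fun m => Fintype.ofFinite _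
  haveI : Fintype X := Fintype.ofFinite _
  rw [Nat.card_sum]
  congr 1
  rw [Nat.card_eq_fintype_card, Fintype.card_sigma]
  rw [← Fin.sum_univ_eq_sum_range
    (fun k => Nat.card {w : W X // motzkinNorm w = k + 1} *
      Nat.card {w : W X // motzkinNorm w = n - k})]
  congr 1
  ext k
  simp [Nat.card_eq_fintype_card]

/-- On the Cartesian (1,2)-magma `W X` generated by a finite set `X`
with `Nat.card X = p`, equipped with the Motzkin norm, the number of elements of norm
`n ≥ 1` is the `p`-Motzkin number `M p (n-1)`, where the `p`-Motzkin numbers are defined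
by `M p 0 = M p 1 = p` and `M p n = M p (n-1) + ∑_{k=0}^{n-2} M p k · M p (n-k-2)` for
`n ≥ 2`. -/
theorem stmt15 {X : Type u} [Finite X] (p : ℕ) (hX : Nat.card X = p)
    (M : ℕ → ℕ) (hM0 : M 0 = p) (hM1 : M 1 = p)
    (hM : ∀ m : ℕ, M (m + 2) = M (m + 1) + ∑ k ∈ Finset.range (m + 1), M k * M (m - k))
    (n : ℕ) (hn : 1 ≤ n) :
    Nat.card {w : W X // motzkinNorm w = n} = M (n - 1) := by
  have key : ∀ m : ℕ, Nat.card {w : W X // motzkinNorm w = m + 1} = M m := by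
    intro m
    induction m using Nat.strong_induction_on with
    | _ m ih =>
      match m with
      | 0 => rw [card_one, hX, hM0]
      | 1 =>
        rw [show (1 + 1 : ℕ) = 0 + 2 from rfl, card_rec]
        simp [card_one, hX, hM1]
      | (m + 2) =>
        rw [show (m + 2 + 1 : ℕ) = (m + 1) + 2 from rfl, card_rec, hM]
        rw [ih (m + 1) (by omega)]
        congr 1
        apply Finset.sum_congr rfl
        intro k hk
        simp only [Finset.mem_range] at hk
        rw [ih k (by omega), show m + 1 - k = (m - k) + 1 by omega, ih (m - k) (by omega)]
  obtain ⟨m, rfl⟩ : ∃ m, n = m + 1 := ⟨n - 1, by omega⟩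
  simpa using key m
end

section
/- Let (M, f, ⋆) and (N, g, ⋉) be (1,2)-magmas, let κ₁, κ₂ : ℕ with κ₁ ≥ 1, and let νM : M → ℕ and νN : N → ℕ satisfy: νM m ≥ 1 for all m, νM (f m) = νM m + κ₁ and νM (m ⋆ m') = νM m + νM m' + κ₂ for all m, m' ∈ M, and νN (g x) = νN x + κ₁ and νN (x ⋉ y) = νN x + νN y + κ₂ for all x, y ∈ N. If Γ : M → N is a (1,2)-magma morphism such that νN (Γ m) = νM m for every irreducible m ∈ M, then Γ preserves the norm on all of M: νN (Γ m) = νM m for every m ∈ M. -/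
/-! Because `κ₁ ≥ 1` and all norms in `M` are positive, both operations strictly increase `νM`,
so strong induction on `νM` reduces every element to irreducible ones, and the norm identities
carry the equality `νN ∘ Γ = νM` through each operation. -/

theorem magma_induction_of_norm_lt {M : Type*} (f : M → M) (star : M → M → M) (ν : M → ℕ)
    (hf : ∀ m, ν m < ν (f m))
    (hstar_left : ∀ m m', ν m < ν (star m m')) (hstar_right : ∀ m m', ν m' < ν (star m m'))
    {P : M → Prop}
    (hirr : ∀ m : M, (∀ m', f m' ≠ m) → (∀ m₁ m₂, star m₁ m₂ ≠ m) → P m)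
    (hPf : ∀ m, P m → P (f m)) (hPstar : ∀ m m', P m → P m' → P (star m m')) :
    ∀ m, P m := by
  intro m
  induction m using (measure ν).wf.induction with
  | _ m ih =>
    by_cases h_range_f : ∃ m', f m' = m
    · obtain ⟨m', rfl⟩ := h_range_f
      exact hPf m' (ih m' (hf m'))
    by_cases h_range_star : ∃ m₁ m₂, star m₁ m₂ = m
    · obtain ⟨m₁, m₂, rfl⟩ := h_range_star
      exact hPstar m₁ m₂ (ih m₁ (hstar_left m₁ m₂)) (ih m₂ (hstar_right m₁ m₂))
    push Not at h_range_f h_range_star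
    exact hirr m h_range_f h_range_star

/-- Let `(M, f, ⋆)` and `(N, g, ⋉)` be (1,2)-magmas carrying norms that
shift by `κ₁ ≥ 1` under the unary maps and add up to `κ₂` under the binary maps, with
`νM m ≥ 1` for all `m`.  If a (1,2)-magma morphism `Γ : M → N` preserves the norm on
irreducible elements of `M`, then it preserves the norm everywhere. -/
theorem stmt19 {M N : Type*}
    (f : M → M) (star : M → M → M)
    (g : N → N) (ltimes : N → N → N)
    (κ₁ κ₂ : ℕ) (hκ₁ : 1 ≤ κ₁)
    (νM : M → ℕ) (νN : N → ℕ)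
    (hνM1 : ∀ m, 1 ≤ νM m)
    (hνMf : ∀ m, νM (f m) = νM m + κ₁)
    (hνMs : ∀ m m', νM (star m m') = νM m + νM m' + κ₂)
    (hνNg : ∀ x, νN (g x) = νN x + κ₁)
    (hνNl : ∀ x y, νN (ltimes x y) = νN x + νN y + κ₂)
    (Γ : M → N)
    (hΓf : ∀ m, Γ (f m) = g (Γ m))
    (hΓs : ∀ m m', Γ (star m m') = ltimes (Γ m) (Γ m'))
    (hirr : ∀ m : M, (∀ m', f m' ≠ m) → (∀ m₁ m₂, star m₁ m₂ ≠ m) → νN (Γ m) = νM m) :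
    ∀ m : M, νN (Γ m) = νM m := by
  have hνM_f_lt : ∀ m, νM m < νM (f m) := fun m => by rw [hνMf]; omega
  have hνM_star_left : ∀ m m', νM m < νM (star m m') := fun m m' => by
    have := hνM1 m'
    rw [hνMs]; omega
  have hνM_star_right : ∀ m m', νM m' < νM (star m m') := fun m m' => by
    have := hνM1 m
    rw [hνMs]; omega
  refine magma_induction_of_norm_lt f star νM hνM_f_lt hνM_star_left hνM_star_right hirr ?_ ?_
  · intro m hm
    rw [hΓf, hνNg, hνMf, hm]
  · intro m m' hm hm'
    rw [hΓs, hνNl, hνMs, hm, hm']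
end
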